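/- Sequential lower semicontinuity of the denoising functional: let v ∈ A, α > 0, and define F(w) := ∫_Ω d(w(x),v(x))^p dx + α·∫_{Ω×Ω} d(w(x),w(y))^p · ρ(x−y) / ‖x−y‖^{N+ps} d(x,y) for w ∈ A, with values in [0,∞]. If (w_n) is a sequence in A and w⋆ ∈ A with ∫_Ω ‖w_n(x) − w⋆(x)‖^p dx → 0 as n → ∞, then F(w⋆) ≤ liminf_{n→∞} F(w_n). -/

import Mathlib

open MeasureTheory Filter Set
open scoped Topology ENNReal

/-- The variational denoising functional
`F(w) = ∫_Ω d(w,v)^p + α ∫_{Ω×Ω} d(w(x),w(y))^p ρ(x-y)/‖x-y‖^{N+ps}`. -/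
noncomputable def denoisingFunctional {N M : ℕ}
    (Ω : Set (EuclideanSpace ℝ (Fin N))) (p s α : ℝ)
    (d : EuclideanSpace ℝ (Fin M) → EuclideanSpace ℝ (Fin M) → ℝ)
    (ρ : EuclideanSpace ℝ (Fin N) → ℝ)
    (v w : EuclideanSpace ℝ (Fin N) → EuclideanSpace ℝ (Fin M)) : ℝ≥0∞ :=
  (∫⁻ x in Ω, ENNReal.ofReal (d (w x) (v x)) ^ p) +
    ENNReal.ofReal α * ∫⁻ z in Ω ×ˢ Ω,
      ENNReal.ofReal (d (w z.1) (w z.2)) ^ p * ENNReal.ofReal (ρ (z.1 - z.2)) /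
        ENNReal.ofReal (‖z.1 - z.2‖ ^ ((N : ℝ) + p * s))

/-- A function continuous on a closed set, extended by `0`, is measurable. -/
lemma measurable_indicator_of_isClosed {X : Type*} [TopologicalSpace X] [MeasurableSpace X]
    [OpensMeasurableSpace X] {s : Set X} (hs : IsClosed s) {f : X → ℝ}
    (hf : ContinuousOn f s) : Measurable (s.indicator f) := by
  apply measurable_of_isOpen
  intro U hU
  obtain ⟨V, hV, hVeq⟩ := continuousOn_iff'.mp hf U hU
  by_cases h0 : (0 : ℝ) ∈ U
  · have hset : s.indicator f ⁻¹' U = (V ∩ s) ∪ sᶜ := by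
      ext x
      by_cases hx : x ∈ s
      · have h' := Set.ext_iff.mp hVeq x
        simp only [mem_inter_iff, mem_preimage, hx, and_true] at h'
        simp [indicator_of_mem hx, hx, h']
      · simp [indicator_of_notMem hx, hx, h0]
    rw [hset]
    exact (hV.measurableSet.inter hs.measurableSet).union hs.measurableSet.compl
  · have hset : s.indicator f ⁻¹' U = V ∩ s := by
      ext x
      by_cases hx : x ∈ s
      · have h' := Set.ext_iff.mp hVeq x
        simp only [mem_inter_iff, mem_preimage, hx, and_true] at h'
        simp [indicator_of_mem hx, hx, h']
      · simp [indicator_of_notMem hx, hx, h0]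
    rw [hset]
    exact hV.measurableSet.inter hs.measurableSet

/-- Superadditivity of `liminf` on `ℝ≥0∞`. -/
lemma my_le_liminf_add (u v : ℕ → ℝ≥0∞) :
    atTop.liminf u + atTop.liminf v ≤ atTop.liminf (fun n => u n + v n) := by
  rw [le_liminf_iff]
  intro b hb
  rcases eq_or_ne (atTop.liminf u) 0 with h1 | h1
  · rw [h1, zero_add] at hb
    filter_upwards [eventually_lt_of_lt_liminf hb] with n hn
    exact hn.trans_le le_add_self
  rcases eq_or_ne (atTop.liminf v) 0 with h2 | h2
  · rw [h2, add_zero] at hb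
    filter_upwards [eventually_lt_of_lt_liminf hb] with n hn
    exact hn.trans_le (self_le_add_right _ _)
  obtain ⟨y, hy, z, hz, hbyz⟩ := ENNReal.exists_lt_add_of_lt_add hb h1 h2
  filter_upwards [eventually_lt_of_lt_liminf hy, eventually_lt_of_lt_liminf hz] with n hun hvn
  exact hbyz.trans_le (add_le_add hun.le hvn.le)

/-- Key lemma: lower semicontinuity along sequences converging a.e. on `Ω`. -/
lemma key_lsc {N M : ℕ}
    (Ω : Set (EuclideanSpace ℝ (Fin N))) (hΩ : MeasurableSet Ω)
    (p s α : ℝ) (hp : 0 < p)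
    (K : Set (EuclideanSpace ℝ (Fin M))) (hKcl : IsClosed K)
    (d : EuclideanSpace ℝ (Fin M) → EuclideanSpace ℝ (Fin M) → ℝ)
    (hd_self : ∀ a ∈ K, d a a = 0)
    (hd_cont : ContinuousOn
      (fun q : EuclideanSpace ℝ (Fin M) × EuclideanSpace ℝ (Fin M) => d q.1 q.2) (K ×ˢ K))
    (ρ : EuclideanSpace ℝ (Fin N) → ℝ) (hρcont : Continuous ρ)
    (v : EuclideanSpace ℝ (Fin N) → EuclideanSpace ℝ (Fin M))
    (hv : Measurable v) (hvK : ∀ x ∈ Ω, v x ∈ K)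
    (u : ℕ → EuclideanSpace ℝ (Fin N) → EuclideanSpace ℝ (Fin M))
    (hu : ∀ n, Measurable (u n)) (huK : ∀ n, ∀ x ∈ Ω, u n x ∈ K)
    (wstar : EuclideanSpace ℝ (Fin N) → EuclideanSpace ℝ (Fin M))
    (hwstar : Measurable wstar) (hwstarK : ∀ x ∈ Ω, wstar x ∈ K)
    (hae : ∀ᵐ x ∂(volume.restrict Ω), Tendsto (fun n => u n x) atTop (𝓝 (wstar x))) :
    denoisingFunctional Ω p s α d ρ v wstar ≤
      atTop.liminf (fun n => denoisingFunctional Ω p s α d ρ v (u n)) := by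
  classical
  set D : EuclideanSpace ℝ (Fin M) × EuclideanSpace ℝ (Fin M) → ℝ :=
    (K ×ˢ K).indicator (fun q => d q.1 q.2) with hDdef
  have hD : Measurable D := measurable_indicator_of_isClosed (hKcl.prod hKcl) hd_cont
  have hDeq : ∀ q ∈ K ×ˢ K, D q = d q.1 q.2 := fun q hq => indicator_of_mem hq _
  have hDcont : ContinuousOn D (K ×ˢ K) := hd_cont.congr hDeq
  -- A general convergence fact for the integrands
  have hTend : ∀ (a b : EuclideanSpace ℝ (Fin M))
      (f g : ℕ → EuclideanSpace ℝ (Fin M)), (∀ n, f n ∈ K) → (∀ n, g n ∈ K) →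
      a ∈ K → b ∈ K → Tendsto f atTop (𝓝 a) → Tendsto g atTop (𝓝 b) →
      Tendsto (fun n => ENNReal.ofReal (D (f n, g n)) ^ p) atTop
        (𝓝 (ENNReal.ofReal (D (a, b)) ^ p)) := by
    intro a b f g hf hg ha hb hfa hgb
    have h1 : Tendsto (fun n => (f n, g n)) atTop (𝓝[K ×ˢ K] (a, b)) := by
      rw [tendsto_nhdsWithin_iff]
      exact ⟨hfa.prodMk_nhds hgb, Eventually.of_forall fun n => ⟨hf n, hg n⟩⟩
    have h2 : Tendsto (fun n => D (f n, g n)) atTop (𝓝 (D (a, b))) :=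
      (hDcont (a, b) ⟨ha, hb⟩).tendsto.comp h1
    exact (ENNReal.continuous_rpow_const.tendsto _).comp
      ((ENNReal.continuous_ofReal.tendsto _).comp h2)
  -- Part 1: the fidelity term
  have hrw : ∀ (f : EuclideanSpace ℝ (Fin N) → EuclideanSpace ℝ (Fin M)),
      (∀ x ∈ Ω, f x ∈ K) →
      (∫⁻ x in Ω, ENNReal.ofReal (d (f x) (v x)) ^ p)
        = ∫⁻ x in Ω, ENNReal.ofReal (D (f x, v x)) ^ p := by
    intro f hfK
    refine setLIntegral_congr_fun_ae hΩ (Eventually.of_forall fun x hx => ?_)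
    rw [hDeq _ ⟨hfK x hx, hvK x hx⟩]
  have hA : (∫⁻ x in Ω, ENNReal.ofReal (d (wstar x) (v x)) ^ p) ≤
      atTop.liminf (fun n => ∫⁻ x in Ω, ENNReal.ofReal (d (u n x) (v x)) ^ p) := by
    rw [hrw wstar hwstarK]
    have hmeas : ∀ n, Measurable fun x => ENNReal.ofReal (D (u n x, v x)) ^ p := fun n =>
      ((hD.comp ((hu n).prodMk hv)).ennreal_ofReal).pow measurable_const
    calc (∫⁻ x in Ω, ENNReal.ofReal (D (wstar x, v x)) ^ p)
        = ∫⁻ x in Ω, atTop.liminf (fun n => ENNReal.ofReal (D (u n x, v x)) ^ p) := by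
          refine lintegral_congr_ae ?_
          filter_upwards [hae, ae_restrict_mem hΩ] with x hx hxΩ
          exact (hTend _ _ _ _ (fun n => huK n x hxΩ) (fun _ => hvK x hxΩ)
            (hwstarK x hxΩ) (hvK x hxΩ) hx tendsto_const_nhds).liminf_eq.symm
      _ ≤ atTop.liminf (fun n => ∫⁻ x in Ω, ENNReal.ofReal (D (u n x, v x)) ^ p) :=
          lintegral_liminf_le hmeas
      _ = atTop.liminf (fun n => ∫⁻ x in Ω, ENNReal.ofReal (d (u n x) (v x)) ^ p) := by
          congr 1
          funext n
          exact (hrw (u n) (huK n)).symm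
  -- Part 2: the nonlocal term
  set g : EuclideanSpace ℝ (Fin N) × EuclideanSpace ℝ (Fin N) → ℝ≥0∞ := fun z =>
    ENNReal.ofReal (ρ (z.1 - z.2)) / ENNReal.ofReal (‖z.1 - z.2‖ ^ ((N : ℝ) + p * s))
    with hgdef
  have hgmeas : Measurable g :=
    ((hρcont.measurable.comp (measurable_fst.sub measurable_snd)).ennreal_ofReal).div
      ((((measurable_fst.sub measurable_snd).norm).pow measurable_const).ennreal_ofReal)
  have hrw2 : ∀ (f : EuclideanSpace ℝ (Fin N) → EuclideanSpace ℝ (Fin M)),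
      (∀ x ∈ Ω, f x ∈ K) →
      (∫⁻ z in Ω ×ˢ Ω, ENNReal.ofReal (d (f z.1) (f z.2)) ^ p *
          ENNReal.ofReal (ρ (z.1 - z.2)) /
          ENNReal.ofReal (‖z.1 - z.2‖ ^ ((N : ℝ) + p * s)))
        = ∫⁻ z in Ω ×ˢ Ω, ENNReal.ofReal (D (f z.1, f z.2)) ^ p * g z := by
    intro f hfK
    refine setLIntegral_congr_fun_ae (hΩ.prod hΩ) (Eventually.of_forall fun z hz => ?_)
    rw [mul_div_assoc, hDeq _ ⟨hfK _ hz.1, hfK _ hz.2⟩]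
  have hν : (volume : Measure (EuclideanSpace ℝ (Fin N) × EuclideanSpace ℝ (Fin N))).restrict
      (Ω ×ˢ Ω) = (volume.restrict Ω).prod (volume.restrict Ω) := by
    rw [Measure.volume_eq_prod, Measure.prod_restrict]
  -- lift a.e. convergence to the product
  obtain ⟨T, hTsub, hTmeas, hT0⟩ := exists_measurable_superset_of_null (ae_iff.mp hae)
  have haeprod : ∀ᵐ z ∂((volume.restrict Ω).prod (volume.restrict Ω)),
      Tendsto (fun n => u n z.1) atTop (𝓝 (wstar z.1)) ∧
        Tendsto (fun n => u n z.2) atTop (𝓝 (wstar z.2)) := by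
    rw [ae_iff]
    have hnull : ((volume.restrict Ω).prod (volume.restrict Ω))
        ((T ×ˢ univ) ∪ (univ ×ˢ T)) = 0 :=
      measure_union_null (by rw [Measure.prod_prod, hT0, zero_mul])
        (by rw [Measure.prod_prod, hT0, mul_zero])
    refine measure_mono_null (fun z hz => ?_) hnull
    simp only [mem_setOf_eq, not_and_or] at hz
    rcases hz with hz | hz
    · exact Or.inl ⟨hTsub hz, mem_univ _⟩
    · exact Or.inr ⟨mem_univ _, hTsub hz⟩
  have haemem : ∀ᵐ z ∂((volume.restrict Ω).prod (volume.restrict Ω)), z ∈ Ω ×ˢ Ω := by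
    rw [← hν]
    exact ae_restrict_mem (hΩ.prod hΩ)
  have hB : (∫⁻ z in Ω ×ˢ Ω, ENNReal.ofReal (d (wstar z.1) (wstar z.2)) ^ p *
        ENNReal.ofReal (ρ (z.1 - z.2)) /
        ENNReal.ofReal (‖z.1 - z.2‖ ^ ((N : ℝ) + p * s))) ≤
      atTop.liminf (fun n => ∫⁻ z in Ω ×ˢ Ω, ENNReal.ofReal (d (u n z.1) (u n z.2)) ^ p *
        ENNReal.ofReal (ρ (z.1 - z.2)) /
        ENNReal.ofReal (‖z.1 - z.2‖ ^ ((N : ℝ) + p * s))) := by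
    rw [hrw2 wstar hwstarK]
    have hstep : ∀ n, (∫⁻ z in Ω ×ˢ Ω, ENNReal.ofReal (d (u n z.1) (u n z.2)) ^ p *
        ENNReal.ofReal (ρ (z.1 - z.2)) /
        ENNReal.ofReal (‖z.1 - z.2‖ ^ ((N : ℝ) + p * s)))
        = ∫⁻ z, ENNReal.ofReal (D (u n z.1, u n z.2)) ^ p * g z
            ∂((volume.restrict Ω).prod (volume.restrict Ω)) := by
      intro n
      rw [hrw2 (u n) (huK n), ← hν]
    simp only [hstep]
    rw [← hν]
    rw [hν]
    have hval : ∀ a : EuclideanSpace ℝ (Fin M), a ∈ K →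
        ENNReal.ofReal (D (a, a)) ^ p = 0 := by
      intro a ha
      rw [hDeq _ ⟨ha, ha⟩, hd_self a ha, ENNReal.ofReal_zero, ENNReal.zero_rpow_of_pos hp]
    have hmeas2 : ∀ n, Measurable fun z :
        EuclideanSpace ℝ (Fin N) × EuclideanSpace ℝ (Fin N) =>
        ENNReal.ofReal (D (u n z.1, u n z.2)) ^ p * g z := fun n =>
      (((hD.comp (((hu n).comp measurable_fst).prodMk
        ((hu n).comp measurable_snd))).ennreal_ofReal).pow measurable_const).mul hgmeas
    calc (∫⁻ z, ENNReal.ofReal (D (wstar z.1, wstar z.2)) ^ p * g z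
          ∂((volume.restrict Ω).prod (volume.restrict Ω)))
        = ∫⁻ z, atTop.liminf (fun n => ENNReal.ofReal (D (u n z.1, u n z.2)) ^ p * g z)
            ∂((volume.restrict Ω).prod (volume.restrict Ω)) := by
          refine lintegral_congr_ae ?_
          filter_upwards [haeprod, haemem] with z hz hzΩ
          refine (Filter.Tendsto.liminf_eq ?_).symm
          rcases eq_or_ne z.1 z.2 with he | he
          · have h₂ : ENNReal.ofReal (D (wstar z.1, wstar z.2)) ^ p * g z = 0 := by
              rw [← he, hval _ (hwstarK _ hzΩ.1), zero_mul]
            have h₁ : ∀ n, ENNReal.ofReal (D (u n z.1, u n z.2)) ^ p * g z = 0 := by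
              intro n
              rw [← he, hval _ (huK n _ hzΩ.1), zero_mul]
            rw [h₂]
            simp only [h₁]
            exact tendsto_const_nhds
          · have hgne : g z ≠ ∞ := by
              have hpos : 0 < ‖z.1 - z.2‖ ^ ((N : ℝ) + p * s) :=
                Real.rpow_pos_of_pos (norm_pos_iff.mpr (sub_ne_zero.mpr he)) _
              exact (ENNReal.div_lt_top ENNReal.ofReal_ne_top
                (ENNReal.ofReal_pos.mpr hpos).ne').ne
            exact ENNReal.Tendsto.mul_const
              (hTend _ _ _ _ (fun n => huK n _ hzΩ.1) (fun n => huK n _ hzΩ.2)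
                (hwstarK _ hzΩ.1) (hwstarK _ hzΩ.2) hz.1 hz.2) (Or.inr hgne)
      _ ≤ atTop.liminf (fun n => ∫⁻ z, ENNReal.ofReal (D (u n z.1, u n z.2)) ^ p * g z
            ∂((volume.restrict Ω).prod (volume.restrict Ω))) :=
          lintegral_liminf_le hmeas2
  -- combine
  have hmul : ENNReal.ofReal α *
      atTop.liminf (fun n => ∫⁻ z in Ω ×ˢ Ω, ENNReal.ofReal (d (u n z.1) (u n z.2)) ^ p *
        ENNReal.ofReal (ρ (z.1 - z.2)) /
        ENNReal.ofReal (‖z.1 - z.2‖ ^ ((N : ℝ) + p * s)))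
      = atTop.liminf (fun n => ENNReal.ofReal α *
          ∫⁻ z in Ω ×ˢ Ω, ENNReal.ofReal (d (u n z.1) (u n z.2)) ^ p *
            ENNReal.ofReal (ρ (z.1 - z.2)) /
            ENNReal.ofReal (‖z.1 - z.2‖ ^ ((N : ℝ) + p * s))) := by
    have hmono : Monotone fun x : ℝ≥0∞ => ENNReal.ofReal α * x :=
      fun _ _ h => mul_le_mul_right h _
    have := hmono.map_liminf_of_continuousAt (F := atTop)
      (fun n => ∫⁻ z in Ω ×ˢ Ω, ENNReal.ofReal (d (u n z.1) (u n z.2)) ^ p *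
        ENNReal.ofReal (ρ (z.1 - z.2)) /
        ENNReal.ofReal (‖z.1 - z.2‖ ^ ((N : ℝ) + p * s)))
      ((ENNReal.continuous_const_mul ENNReal.ofReal_ne_top).continuousAt)
    simpa [Function.comp_def] using this
  unfold denoisingFunctional
  calc (∫⁻ x in Ω, ENNReal.ofReal (d (wstar x) (v x)) ^ p) +
      ENNReal.ofReal α * ∫⁻ z in Ω ×ˢ Ω, ENNReal.ofReal (d (wstar z.1) (wstar z.2)) ^ p *
        ENNReal.ofReal (ρ (z.1 - z.2)) /
        ENNReal.ofReal (‖z.1 - z.2‖ ^ ((N : ℝ) + p * s))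
      ≤ atTop.liminf (fun n => ∫⁻ x in Ω, ENNReal.ofReal (d (u n x) (v x)) ^ p) +
        atTop.liminf (fun n => ENNReal.ofReal α *
          ∫⁻ z in Ω ×ˢ Ω, ENNReal.ofReal (d (u n z.1) (u n z.2)) ^ p *
            ENNReal.ofReal (ρ (z.1 - z.2)) /
            ENNReal.ofReal (‖z.1 - z.2‖ ^ ((N : ℝ) + p * s))) := by
        rw [← hmul]
        exact add_le_add hA (mul_le_mul_right hB _)
    _ ≤ _ := my_le_liminf_add _ _

/-- Sequential lower semicontinuity of the denoising functional with respect to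
`L^p` convergence in the admissible class. -/
theorem denoising_functional_lsc
    (N M : ℕ) (hN : 1 ≤ N) (hM : 1 ≤ M)
    (Ω : Set (EuclideanSpace ℝ (Fin N))) (hΩ : MeasurableSet Ω)
    (hΩbd : Bornology.IsBounded Ω)
    (p s : ℝ) (hp : 1 < p) (hs0 : 0 < s) (hs1 : s < 1)
    (K : Set (EuclideanSpace ℝ (Fin M))) (hKne : K.Nonempty) (hKcl : IsClosed K)
    (d : EuclideanSpace ℝ (Fin M) → EuclideanSpace ℝ (Fin M) → ℝ)
    (hd_nonneg : ∀ a ∈ K, ∀ b ∈ K, 0 ≤ d a b)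
    (hd_self : ∀ a ∈ K, d a a = 0)
    (hd_eq : ∀ a ∈ K, ∀ b ∈ K, d a b = 0 → a = b)
    (hd_symm : ∀ a ∈ K, ∀ b ∈ K, d a b = d b a)
    (hd_tri : ∀ a ∈ K, ∀ b ∈ K, ∀ c ∈ K, d a c ≤ d a b + d b c)
    (hd_cont : ContinuousOn
      (fun q : EuclideanSpace ℝ (Fin M) × EuclideanSpace ℝ (Fin M) => d q.1 q.2) (K ×ˢ K))
    (ρ : EuclideanSpace ℝ (Fin N) → ℝ) (hρcont : Continuous ρ) (hρ0 : ∀ z, 0 ≤ ρ z)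
    (v : EuclideanSpace ℝ (Fin N) → EuclideanSpace ℝ (Fin M))
    (hv : Measurable v) (hvK : ∀ x ∈ Ω, v x ∈ K)
    (hvLp : (∫⁻ x in Ω, ENNReal.ofReal ‖v x‖ ^ p) < ⊤)
    (α : ℝ) (hα : 0 < α)
    (w : ℕ → EuclideanSpace ℝ (Fin N) → EuclideanSpace ℝ (Fin M))
    (wstar : EuclideanSpace ℝ (Fin N) → EuclideanSpace ℝ (Fin M))
    (hw : ∀ n, Measurable (w n)) (hwK : ∀ n, ∀ x ∈ Ω, w n x ∈ K)
    (hwLp : ∀ n, (∫⁻ x in Ω, ENNReal.ofReal ‖w n x‖ ^ p) < ⊤)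
    (hwstar : Measurable wstar) (hwstarK : ∀ x ∈ Ω, wstar x ∈ K)
    (hwstarLp : (∫⁻ x in Ω, ENNReal.ofReal ‖wstar x‖ ^ p) < ⊤)
    (hconv : Tendsto (fun n => ∫⁻ x in Ω, ENNReal.ofReal ‖w n x - wstar x‖ ^ p)
      atTop (𝓝 0)) :
    denoisingFunctional Ω p s α d ρ v wstar ≤
      atTop.liminf (fun n => denoisingFunctional Ω p s α d ρ v (w n)) := by
  have hp0 : 0 < p := lt_trans zero_lt_one hp
  by_contra hcon
  push_neg at hcon
  obtain ⟨c, hc1, hc2⟩ := exists_between hcon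
  have hfreq : ∃ᶠ n in atTop, denoisingFunctional Ω p s α d ρ v (w n) < c :=
    frequently_lt_of_liminf_lt (by isBoundedDefault) hc1
  obtain ⟨φ, hφmono, hφ⟩ := extraction_of_frequently_atTop hfreq
  have hconvφ : Tendsto (fun n => ∫⁻ x in Ω, ENNReal.ofReal ‖w (φ n) x - wstar x‖ ^ p)
      atTop (𝓝 0) := hconv.comp hφmono.tendsto_atTop
  -- convert to eLpNorm convergence
  have hq0 : (ENNReal.ofReal p) ≠ 0 := (ENNReal.ofReal_pos.mpr hp0).ne'
  have hqt : (ENNReal.ofReal p) ≠ ∞ := ENNReal.ofReal_ne_top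
  have hELP : ∀ n, eLpNorm (w (φ n) - wstar) (ENNReal.ofReal p) (volume.restrict Ω) =
      (∫⁻ x in Ω, ENNReal.ofReal ‖w (φ n) x - wstar x‖ ^ p) ^ (1 / p) := by
    intro n
    rw [eLpNorm_eq_lintegral_rpow_enorm_toReal hq0 hqt, ENNReal.toReal_ofReal hp0.le]
    congr 1
    refine lintegral_congr fun x => ?_
    rw [Pi.sub_apply, ← ofReal_norm_eq_enorm]
  have heLp : Tendsto (fun n => eLpNorm (w (φ n) - wstar) (ENNReal.ofReal p)
      (volume.restrict Ω)) atTop (𝓝 0) := by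
    simp only [hELP]
    have h0 : ((0 : ℝ≥0∞) ^ (1 / p)) = 0 := ENNReal.zero_rpow_of_pos (by positivity)
    exact h0 ▸ (ENNReal.continuous_rpow_const.tendsto 0).comp hconvφ
  have htm : TendstoInMeasure (volume.restrict Ω) (fun n => w (φ n)) atTop wstar :=
    tendstoInMeasure_of_tendsto_eLpNorm hq0
      (fun n => (hw (φ n)).aestronglyMeasurable) hwstar.aestronglyMeasurable heLp
  obtain ⟨ψ, hψmono, hψae⟩ := htm.exists_seq_tendsto_ae
  have hkey := key_lsc Ω hΩ p s α hp0 K hKcl d hd_self hd_cont ρ hρcont v hv hvK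
    (fun k => w (φ (ψ k))) (fun k => hw _) (fun k => hwK _) wstar hwstar hwstarK hψae
  have hlim : atTop.liminf (fun k => denoisingFunctional Ω p s α d ρ v (w (φ (ψ k)))) ≤ c :=
    liminf_le_of_frequently_le'
      ((Eventually.of_forall fun k => (hφ (ψ k)).le).frequently)
  exact absurd (hkey.trans hlim) (not_le.mpr hc2)
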